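/- Let Y ⊆ ℝ^m be a nonempty finite set and Z a standard Gaussian random vector in ℝ^m. Then F(θ) = E[max_{y ∈ Y} (θ + Z)ᵀ y] is differentiable at every θ ∈ ℝ^m with gradient ∇F(θ) = E[argmax_{y ∈ Y} (θ + Z)ᵀ y], where the argmax is almost surely unique provided distinct elements of Y differ (more precisely, the set of z with non-unique argmax has Lebesgue measure zero when Y has at least two distinct elements, and the expectation of any measurable argmax selection is well-defined and equals ∇F(θ)). -/

import Mathlib

/-!
The maximum `σ(x) = max_{y ∈ Y} ⟪x, y⟫` is Lipschitz, and at every `x` where the maximizer `y*`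
is unique it coincides near `x` with the linear map `⟪·, y*⟫`, so `∇σ(x) = y*` there. Two
distinct points of `Y` tie only on the hyperplane orthogonal to their difference, which is
null both for Lebesgue measure and for the standard Gaussian (whose one-dimensional marginals
are nondegenerate). Hence for a.e. `ω` the function `σ(· + Z ω)` has gradient `g (θ + Z ω)` at
`θ`, and dominated differentiation under the integral sign, with the uniform Lipschitz
constant `max_{y ∈ Y} ‖y‖`, gives `∇F(θ) = E[g (θ + Z)]`.
-/

open scoped RealInnerProductSpace
open MeasureTheory

/-- `Z` is a standard Gaussian random vector in `ℝ^m`: its coordinates are independent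
and each is distributed as `N(0,1)`. -/
def IsStdGaussian {Ω : Type*} [MeasurableSpace Ω] (μ : Measure Ω) {m : ℕ}
    (Z : Ω → EuclideanSpace ℝ (Fin m)) : Prop :=
  (∀ i, Measure.map (fun ω => Z ω i) μ = ProbabilityTheory.gaussianReal 0 1) ∧
    ProbabilityTheory.iIndepFun (m := fun _ : Fin m => (inferInstance : MeasurableSpace ℝ))
      (fun i ω => Z ω i) μ

open ProbabilityTheory Filter
open scoped NNReal

section SupportFunction

variable {E : Type*} [NormedAddCommGroup E] [InnerProductSpace ℝ E]

def supportFunction (Y : Finset E) (hY : Y.Nonempty) (x : E) : ℝ :=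
  Y.sup' hY fun y => ⟪x, y⟫

variable {Y : Finset E} (hY : Y.Nonempty)

lemma supportFunction_zero : supportFunction Y hY 0 = 0 := by
  simp [supportFunction]

lemma lipschitzWith_supportFunction :
    LipschitzWith (Y.sup' hY fun y => ‖y‖₊) (supportFunction Y hY) := by
  refine LipschitzWith.of_le_add_mul _ fun x₁ x₂ => Finset.sup'_le _ _ fun y hy => ?_
  have hnorm : ‖y‖ ≤ (Y.sup' hY fun y => ‖y‖₊ : ℝ≥0) := by
    exact_mod_cast Finset.le_sup' (fun y => ‖y‖₊) hy
  calc ⟪x₁, y⟫ = ⟪x₂, y⟫ + ⟪x₁ - x₂, y⟫ := by rw [inner_sub_left]; ring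
    _ ≤ supportFunction Y hY x₂ + ‖x₁ - x₂‖ * ‖y‖ :=
      add_le_add (Finset.le_sup' _ hy) (real_inner_le_norm _ _)
    _ ≤ _ := by
      rw [← dist_eq_norm, mul_comm]
      gcongr

lemma hasGradientAt_supportFunction [CompleteSpace E] {x ys : E} (hys : ys ∈ Y)
    (hlt : ∀ y ∈ Y, y ≠ ys → ⟪x, y⟫ < ⟪x, ys⟫) :
    HasGradientAt (supportFunction Y hY) ys x := by
  have hnear : ∀ᶠ x' in nhds x, ∀ y ∈ Y, y ≠ ys → ⟪x', y⟫ < ⟪x', ys⟫ := by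
    refine (eventually_all_finset Y).2 fun y hy => ?_
    by_cases hne : y = ys
    · exact .of_forall fun _ h => absurd hne h
    · have hcont : ∀ v : E, ContinuousAt (fun x' => ⟪x', v⟫) x := fun v => by fun_prop
      exact ((hcont y).eventually_lt (hcont ys) (hlt y hy hne)).mono fun _ h _ => h
  have hlocal : supportFunction Y hY =ᶠ[nhds x] fun x => ⟪ys, x⟫ := by
    filter_upwards [hnear] with x' h
    rw [real_inner_comm]
    refine le_antisymm (Finset.sup'_le _ _ fun y hy => ?_) (Finset.le_sup' _ hys)
    rcases eq_or_ne y ys with rfl | hne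
    exacts [le_rfl, (h y hy hne).le]
  exact (hasGradientAt_iff_hasFDerivAt.2 (InnerProductSpace.toDual ℝ E ys).hasFDerivAt)
    |>.congr_of_eventuallyEq hlocal

end SupportFunction

section Argmax

variable {E : Type*} [NormedAddCommGroup E] [InnerProductSpace ℝ E] {Y : Finset E}

lemma existsUnique_max_inner_of_injOn (hY : Y.Nonempty) {z : E}
    (hinj : Set.InjOn (fun y => ⟪z, y⟫) Y) :
    ∃! y, y ∈ Y ∧ ∀ y' ∈ Y, ⟪z, y'⟫ ≤ ⟪z, y⟫ := by
  obtain ⟨y₀, hy₀, hmax⟩ := Y.exists_max_image (fun y => ⟪z, y⟫) hY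
  exact ⟨y₀, ⟨hy₀, hmax⟩, fun y ⟨hy, hymax⟩ =>
    hinj hy hy₀ (le_antisymm (hmax y hy) (hymax y₀ hy₀))⟩

lemma inner_lt_of_existsUnique_max {z ys : E}
    (huniq : ∃! y, y ∈ Y ∧ ∀ y' ∈ Y, ⟪z, y'⟫ ≤ ⟪z, y⟫)
    (hys : ys ∈ Y ∧ ∀ y' ∈ Y, ⟪z, y'⟫ ≤ ⟪z, ys⟫) {y : E} (hy : y ∈ Y) (hne : y ≠ ys) :
    ⟪z, y⟫ < ⟪z, ys⟫ := by
  refine (hys.2 y hy).lt_of_ne fun heq => hne (huniq.unique ⟨hy, fun y' hy' => ?_⟩ hys)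
  exact heq ▸ hys.2 y' hy'

lemma ae_existsUnique_max_inner [MeasurableSpace E] (hY : Y.Nonempty) (ν : Measure E)
    (hν : ∀ d ≠ (0 : E), ν {z | ⟪z, d⟫ = 0} = 0) :
    ∀ᵐ z ∂ν, ∃! y, y ∈ Y ∧ ∀ y' ∈ Y, ⟪z, y'⟫ ≤ ⟪z, y⟫ := by
  have hdistinct : ∀ᵐ z ∂ν, ∀ y₁ ∈ Y, ∀ y₂ ∈ Y, y₁ ≠ y₂ → ⟪z, y₁ - y₂⟫ ≠ 0 := by
    simp only [eventually_all_finset]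
    intro y₁ _ y₂ _
    rcases eq_or_ne y₁ y₂ with rfl | hne
    · exact .of_forall fun _ h => absurd rfl h
    · exact measure_mono_null (fun z hz => not_not.1 (Classical.not_imp.1 hz).2)
        (hν _ (sub_ne_zero.2 hne))
  filter_upwards [hdistinct] with z hz
  refine existsUnique_max_inner_of_injOn hY fun y₁ hy₁ y₂ hy₂ heq => ?_
  by_contra hne
  exact hz y₁ hy₁ y₂ hy₂ hne (by simp only [inner_sub_right, heq, sub_self])

end Argmax

section Hyperplane

variable {E : Type*} [NormedAddCommGroup E] [InnerProductSpace ℝ E] [FiniteDimensional ℝ E]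
  [MeasurableSpace E] [BorelSpace E]

lemma addHaar_setOf_inner_eq_zero (μ : Measure E) [μ.IsAddHaarMeasure] {d : E} (hd : d ≠ 0) :
    μ {z | ⟪z, d⟫ = 0} = 0 := by
  have hset : {z : E | ⟪z, d⟫ = 0} = ((ℝ ∙ d)ᗮ : Submodule ℝ E) := by
    ext z; exact Submodule.mem_orthogonal_singleton_iff_inner_left.symm
  rw [hset]
  refine Measure.addHaar_submodule μ _ fun htop => hd ?_
  have : d ∈ (ℝ ∙ d)ᗮ := htop ▸ Submodule.mem_top
  simpa using Submodule.mem_orthogonal_singleton_iff_inner_right.1 this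

lemma stdGaussian_setOf_inner_eq {d : E} (hd : d ≠ 0) (c : ℝ) :
    stdGaussian E {z | ⟪z, d⟫ = c} = 0 := by
  have hset : {z : E | ⟪z, d⟫ = c} = innerSL ℝ d ⁻¹' {c} := by
    ext z; simp [real_inner_comm]
  have hvar : Var[innerSL ℝ d; stdGaussian E].toNNReal ≠ 0 := by
    rw [variance_dual_stdGaussian, innerSL_apply_norm]
    simpa using hd
  rw [hset, ← Measure.map_apply (innerSL ℝ d).measurable (measurableSet_singleton c),
    IsGaussian.map_eq_gaussianReal]
  exact gaussianReal_absolutelyContinuous _ hvar Real.volume_singleton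

end Hyperplane

namespace IsStdGaussian

variable {Ω : Type*} [MeasurableSpace Ω] {μ : Measure Ω} [IsProbabilityMeasure μ] {m : ℕ}
  {Z : Ω → EuclideanSpace ℝ (Fin m)}

lemma map_eq_stdGaussian (hZ : IsStdGaussian μ Z) (hZmeas : Measurable Z) :
    μ.map Z = stdGaussian (EuclideanSpace ℝ (Fin m)) := by
  have hcoord : ∀ i, Measurable fun ω => Z ω i := fun i => by fun_prop
  have hpi : μ.map (fun ω i => Z ω i) = Measure.pi fun _ => gaussianReal 0 1 := by
    rw [(iIndepFun_iff_map_fun_eq_pi_map fun i => (hcoord i).aemeasurable).1 hZ.2]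
    simp only [hZ.1]
  rw [← map_pi_eq_stdGaussian, ← hpi, Measure.map_map (by fun_prop) (by fun_prop)]
  rfl

lemma integrable (hZ : IsStdGaussian μ Z) (hZmeas : Measurable Z) : Integrable Z μ := by
  have : Integrable id (μ.map Z) := by
    rw [hZ.map_eq_stdGaussian hZmeas]; exact IsGaussian.integrable_id
  exact (integrable_map_measure aestronglyMeasurable_id hZmeas.aemeasurable).1 this

lemma ae_existsUnique_max_inner_add (hZ : IsStdGaussian μ Z) (hZmeas : Measurable Z)
    {Y : Finset (EuclideanSpace ℝ (Fin m))} (hY : Y.Nonempty) (θ : EuclideanSpace ℝ (Fin m)) :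
    ∀ᵐ ω ∂μ, ∃! y, y ∈ Y ∧ ∀ y' ∈ Y, ⟪θ + Z ω, y'⟫ ≤ ⟪θ + Z ω, y⟫ := by
  have hmeas : Measurable fun ω => θ + Z ω := by fun_prop
  refine ae_of_ae_map hmeas.aemeasurable (ae_existsUnique_max_inner hY _ fun d hd => ?_)
  have hset : (fun ω => θ + Z ω) ⁻¹' {z | ⟪z, d⟫ = 0} = Z ⁻¹' {z | ⟪z, d⟫ = -⟪θ, d⟫} := by
    ext ω; simp [inner_add_left, eq_neg_iff_add_eq_zero, add_comm]
  rw [Measure.map_apply hmeas (measurableSet_eq_fun (by fun_prop) (by fun_prop)), hset,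
    ← Measure.map_apply hZmeas (measurableSet_eq_fun (by fun_prop) (by fun_prop)),
    hZ.map_eq_stdGaussian hZmeas]
  exact stdGaussian_setOf_inner_eq hd _

end IsStdGaussian

lemma hasGradientAt_integral_of_lipschitzWith {E α : Type*} [NormedAddCommGroup E]
    [InnerProductSpace ℝ E] [CompleteSpace E] [MeasurableSpace α] {μ : Measure α}
    [IsFiniteMeasure μ] {F : E → α → ℝ} {G : α → E} {x₀ : E} {K : ℝ≥0}
    (hF_meas : ∀ x, AEStronglyMeasurable (F x) μ) (hF_int : Integrable (F x₀) μ)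
    (hF_lip : ∀ a, LipschitzWith K (F · a)) (hG_int : Integrable G μ)
    (hF_grad : ∀ᵐ a ∂μ, HasGradientAt (F · a) (G a) x₀) :
    HasGradientAt (fun x => ∫ a, F x a ∂μ) (∫ a, G a ∂μ) x₀ := by
  have hfderiv := (hasFDerivAt_integral_of_dominated_loc_of_lip (bound := fun _ => (K : ℝ))
    (F' := fun a => innerSL ℝ (G a)) univ_mem (.of_forall hF_meas) hF_int
    ((innerSL ℝ).continuous.comp_aestronglyMeasurable hG_int.1)
    (.of_forall fun a => by simpa only [Real.nnabs_coe, lipschitzOnWith_univ] using hF_lip a)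
    (integrable_const _) hF_grad).2
  rw [(innerSL ℝ).integral_comp_comm hG_int] at hfderiv
  exact hasGradientAt_iff_hasFDerivAt.2 hfderiv

/-- The Gaussian-smoothed maximum `F(θ) = E[max_{y ∈ Y} (θ + Z)ᵀ y]` over a nonempty
finite set `Y ⊆ ℝ^m` is differentiable everywhere with gradient
`∇F(θ) = E[argmax_{y ∈ Y} (θ + Z)ᵀ y]`: when `Y` has at least two elements the set of
perturbations with non-unique argmax has Lebesgue measure zero, and for any measurable
argmax selection `g` its expectation is well-defined (integrable) and is the gradient
of `F` at `θ`. -/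
theorem smoothed_max_gradient {m : ℕ} {Ω : Type*} [MeasurableSpace Ω]
    (μ : Measure Ω) [IsProbabilityMeasure μ]
    (Y : Finset (EuclideanSpace ℝ (Fin m))) (hY : Y.Nonempty)
    (Z : Ω → EuclideanSpace ℝ (Fin m)) (hZmeas : Measurable Z)
    (hZ : IsStdGaussian μ Z) :
    (2 ≤ Y.card →
      volume {z : EuclideanSpace ℝ (Fin m) |
        ¬ ∃! y, y ∈ Y ∧ ∀ y' ∈ Y, ⟪z, y'⟫ ≤ ⟪z, y⟫} = 0) ∧
    ∀ (g : EuclideanSpace ℝ (Fin m) → EuclideanSpace ℝ (Fin m)),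
      Measurable g → (∀ z, g z ∈ Y ∧ ∀ y ∈ Y, ⟪z, y⟫ ≤ ⟪z, g z⟫) →
      ∀ θ : EuclideanSpace ℝ (Fin m),
        Integrable (fun ω => g (θ + Z ω)) μ ∧
        HasGradientAt (fun θ' : EuclideanSpace ℝ (Fin m) =>
            ∫ ω, Y.sup' hY (fun y => ⟪θ' + Z ω, y⟫) ∂μ)
          (∫ ω, g (θ + Z ω) ∂μ) θ := by
  refine ⟨fun _ => ae_iff.1 (ae_existsUnique_max_inner hY volume
    fun d hd => addHaar_setOf_inner_eq_zero volume hd), fun g hg hg_max θ => ?_⟩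
  have hσ_lip := lipschitzWith_supportFunction hY
  have hg_int : Integrable (fun ω => g (θ + Z ω)) μ :=
    .of_bound (hg.comp (by fun_prop)).aestronglyMeasurable (Y.sup' hY (‖·‖))
      (.of_forall fun ω => Finset.le_sup' (‖·‖) (hg_max (θ + Z ω)).1)
  have hF_int : Integrable (fun ω => supportFunction Y hY (θ + Z ω)) μ :=
    memLp_one_iff_integrable.1 <| hσ_lip.comp_memLp (supportFunction_zero hY) <|
      memLp_one_iff_integrable.2 <| (integrable_const θ).add (hZ.integrable hZmeas)
  have hF_grad : ∀ᵐ ω ∂μ,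
      HasGradientAt (fun x => supportFunction Y hY (x + Z ω)) (g (θ + Z ω)) θ := by
    filter_upwards [hZ.ae_existsUnique_max_inner_add hZmeas hY θ] with ω huniq
    exact (hasFDerivAt_comp_add_right (Z ω)).2 <| hasGradientAt_supportFunction hY (hg_max _).1
      fun y hy hne => inner_lt_of_existsUnique_max huniq (hg_max _) hy hne
  exact ⟨hg_int, hasGradientAt_integral_of_lipschitzWith
    (fun x => hσ_lip.continuous.comp_aestronglyMeasurable (by fun_prop)) hF_int
    (fun ω => mul_one (Y.sup' hY fun y => ‖y‖₊) ▸ hσ_lip.comp (isometry_add_right (Z ω)).lipschitz)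
    hg_int hF_grad⟩
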